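/- arXiv:2512.23274 — 2 statements merged into one kernel-verified Lean document; each statement's English description precedes it below -/
import Mathlib

section
/- If F(θ|γ) = C(F¹(θ¹|γ),...,Fⁿ(θⁿ|γ)) where the copula C (with density c) does not depend on γ, and f, f^j denote the joint and marginal densities, then the vector field V with components V^j(θ|γ) = F^j_γ(θ^j|γ)/f^j(θ^j|γ) satisfies the continuity equation ∇_θ·(V(θ|γ)f(θ|γ)) = f_γ(θ|γ) at every interior point where all densities are positive and smooth. -/
/-!
Write the joint density as `c(u) ∏ₖ fᵏ` with `uᵏ = Fᵏ(θᵏ|γ)`, so that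
`Vʲ f = c(u) Fʲ_γ ∏_{k ≠ j} fᵏ`. Differentiating in `θʲ`, the copula factor contributes
`∂ⱼc(u) fʲ Fʲ_γ ∏_{k ≠ j} fᵏ` and the rest contributes `c(u) ∂_θ Fʲ_γ ∏_{k ≠ j} fᵏ`.
Summing over `j`, the first terms add up to `Dc(u)[u_γ] ∏ₖ fᵏ` and, by symmetry of the mixed
partials `∂_θ Fʲ_γ = ∂_γ fʲ`, the second ones to `c(u) ∂_γ ∏ₖ fᵏ`; together this is `f_γ`,
because `c` itself does not depend on `γ`.
-/

open Finset Function

theorem HasFDerivAt.hasDerivAt_fst_slice {E : Type*} [NormedAddCommGroup E] [NormedSpace ℝ E]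
    {Φ : ℝ × ℝ → E} {Φ' : ℝ × ℝ →L[ℝ] E} {x y : ℝ} (h : HasFDerivAt Φ Φ' (x, y)) :
    HasDerivAt (fun x' => Φ (x', y)) (Φ' (1, 0)) x :=
  h.comp_hasDerivAt x ((hasDerivAt_id x).prodMk (hasDerivAt_const x y))

theorem HasFDerivAt.hasDerivAt_snd_slice {E : Type*} [NormedAddCommGroup E] [NormedSpace ℝ E]
    {Φ : ℝ × ℝ → E} {Φ' : ℝ × ℝ →L[ℝ] E} {x y : ℝ} (h : HasFDerivAt Φ Φ' (x, y)) :
    HasDerivAt (fun y' => Φ (x, y')) (Φ' (0, 1)) y :=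
  h.comp_hasDerivAt y ((hasDerivAt_const y x).prodMk (hasDerivAt_id y))

theorem exists_hasDerivAt_mixed_partials {G Gx Gy : ℝ → ℝ → ℝ}
    (hG : ContDiff ℝ 2 (fun p : ℝ × ℝ => G p.1 p.2))
    (hx : ∀ x y, HasDerivAt (G · y) (Gx x y) x) (hy : ∀ x y, HasDerivAt (G x ·) (Gy x y) y)
    (x y : ℝ) : ∃ M, HasDerivAt (Gy · y) M x ∧ HasDerivAt (Gx x ·) M y := by
  set G' := fderiv ℝ (fun p : ℝ × ℝ => G p.1 p.2)
  have hG' : ∀ p, HasFDerivAt (fun p : ℝ × ℝ => G p.1 p.2) (G' p) p := fun p =>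
    (hG.differentiable two_ne_zero p).hasFDerivAt
  have hG'x : ∀ x y, G' (x, y) (1, 0) = Gx x y := fun x y =>
    (hG' (x, y)).hasDerivAt_fst_slice.unique (hx x y)
  have hG'y : ∀ x y, G' (x, y) (0, 1) = Gy x y := fun x y =>
    (hG' (x, y)).hasDerivAt_snd_slice.unique (hy x y)
  have hG'' : HasFDerivAt G' (fderiv ℝ G' (x, y)) (x, y) :=
    ((hG.fderiv_right le_rfl).differentiable one_ne_zero _).hasFDerivAt
  refine ⟨fderiv ℝ G' (x, y) (1, 0) (0, 1), ?_, ?_⟩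
  · simpa only [hG'y, map_zero, add_zero] using
      hG''.hasDerivAt_fst_slice.clm_apply (hasDerivAt_const x (0, 1))
  · rw [second_derivative_symmetric hG' hG'']
    simpa only [hG'x, map_zero, add_zero] using
      hG''.hasDerivAt_snd_slice.clm_apply (hasDerivAt_const y (1, 0))

section Coordinates

variable {ι : Type*} [DecidableEq ι]

theorem hasDerivAt_pi_apply_update {φ : ι → ℝ → ℝ} {θ : ι → ℝ} {j : ι} {a : ℝ}
    (h : HasDerivAt (φ j) a (θ j)) :
    HasDerivAt (fun x k => φ k (update θ j x k)) (Pi.single j a) (θ j) := by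
  refine hasDerivAt_pi.2 fun k => ?_
  rcases eq_or_ne k j with rfl | hk
  · simpa only [update_self, Pi.single_eq_same] using h
  · simpa only [update_of_ne hk, Pi.single_eq_of_ne hk] using hasDerivAt_const _ _

theorem prod_apply_update [Fintype ι] {M : Type*} [CommMonoid M] (g : ι → ℝ → M)
    (θ : ι → ℝ) (j : ι) (x : ℝ) :
    ∏ k, g k (update θ j x k) = g j x * ∏ k ∈ univ.erase j, g k (θ k) := by
  simp only [apply_update g, prod_update_of_mem (mem_univ j), sdiff_singleton_eq_erase]

theorem sum_map_single_mul_prod_erase [Fintype ι] {R : Type*} [CommSemiring R]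
    (L : (ι → R) →ₗ[R] R) (a b : ι → R) :
    ∑ j, L (Pi.single j (a j)) * ((∏ k ∈ univ.erase j, a k) * b j) = L b * ∏ k, a k := by
  have hsingle : ∀ j r, L (Pi.single j r) = r * L (Pi.single j 1) := fun j r => by
    rw [← smul_eq_mul r, ← map_smul, ← Pi.single_smul', smul_eq_mul, mul_one]
  calc ∑ j, L (Pi.single j (a j)) * ((∏ k ∈ univ.erase j, a k) * b j)
      = ∑ j, L (Pi.single j (b j)) * ∏ k, a k := by
        refine sum_congr rfl fun j _ => ?_
        rw [← mul_prod_erase univ a (mem_univ j), hsingle j (a j), hsingle j (b j)]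
        ring
    _ = L b * ∏ k, a k := by rw [← sum_mul, ← map_sum, univ_sum_single]

end Coordinates

theorem stmt0_general (n : ℕ)
    -- marginal CDFs `F j x γ`, marginal densities `f j x γ`, γ-partials `Fγ j x γ`
    (F f Fγ : Fin n → ℝ → ℝ → ℝ)
    -- copula density, independent of γ
    (c : (Fin n → ℝ) → ℝ)
    -- joint density and its γ-partial
    (fjoint fjointγ : (Fin n → ℝ) → ℝ → ℝ)
    -- smoothness: each marginal CDF is C² jointly, copula density is C¹
    (hFsmooth : ∀ j, ContDiff ℝ 2 (fun p : ℝ × ℝ => F j p.1 p.2))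
    (hcsmooth : ContDiff ℝ 1 c)
    -- `f j` is the θ-partial of `F j`, `Fγ j` its γ-partial
    (hf : ∀ j x γ, HasDerivAt (fun y => F j y γ) (f j x γ) x)
    (hFγ : ∀ j x γ, HasDerivAt (fun g => F j x g) (Fγ j x γ) γ)
    -- invariant dependencies: the joint density has the copula form with `c` constant in γ
    (hjoint : ∀ θ γ, fjoint θ γ = c (fun j => F j (θ j) γ) * ∏ j, f j (θ j) γ)
    -- `fjointγ` is the γ-partial of the joint density
    (hjointγ : ∀ θ γ, HasDerivAt (fun g => fjoint θ g) (fjointγ θ γ) γ)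
    -- the vector field `V`
    (V : Fin n → (Fin n → ℝ) → ℝ → ℝ)
    (hV : ∀ j θ γ, V j θ γ = Fγ j (θ j) γ / f j (θ j) γ)
    -- a point where densities are positive
    (θ : Fin n → ℝ) (γ : ℝ)
    (hfpos : ∀ j x g, 0 < f j x g)
    -- `D j` is the j-th partial derivative of `(V f)^j` in `θ^j` at the point
    (D : Fin n → ℝ)
    (hD : ∀ j, HasDerivAt
      (fun x => V j (Function.update θ j x) γ * fjoint (Function.update θ j x) γ)
      (D j) (θ j)) :
    -- continuity equation: divergence of `V f` equals `f_γ`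
    ∑ j, D j = fjointγ θ γ := by
  classical
  set u : Fin n → ℝ := fun k => F k (θ k) γ
  set L := fderiv ℝ c u
  have hc : HasFDerivAt c L u := (hcsmooth.differentiable one_ne_zero u).hasFDerivAt
  choose M hMθ hMγ using fun j =>
    exists_hasDerivAt_mixed_partials (hFsmooth j) (hf j) (hFγ j) (θ j) γ
  have hflux : ∀ j, D j = L (Pi.single j (f j (θ j) γ)) *
        ((∏ k ∈ univ.erase j, f k (θ k) γ) * Fγ j (θ j) γ) +
      c u * ((∏ k ∈ univ.erase j, f k (θ k) γ) * M j) := fun j => by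
    have hVf : (fun x => V j (update θ j x) γ * fjoint (update θ j x) γ) = fun x =>
        c (fun k => F k (update θ j x k) γ) * ((∏ k ∈ univ.erase j, f k (θ k) γ) * Fγ j x γ) :=
      funext fun x => by
        rw [hV, hjoint, update_self, prod_apply_update (fun k y => f k y γ)]
        field_simp [(hfpos j x γ).ne']
    have hcj : HasDerivAt (fun x => c (fun k => F k (update θ j x k) γ))
        (L (Pi.single j (f j (θ j) γ))) (θ j) :=
      hc.comp_hasDerivAt_of_eq _ (hasDerivAt_pi_apply_update (φ := fun k y => F k y γ)
        (hf j (θ j) γ)) (by simp [u])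
    refine (hD j).unique ?_
    rw [hVf]
    simpa only [update_eq_self] using hcj.fun_mul ((hMθ j).const_mul _)
  have hdensity : fjointγ θ γ = L (fun k => Fγ k (θ k) γ) * ∏ k, f k (θ k) γ +
      c u * ∑ j, (∏ k ∈ univ.erase j, f k (θ k) γ) * M j := by
    refine (hjointγ θ γ).unique ?_
    simp only [hjoint]
    exact (hc.comp_hasDerivAt γ (hasDerivAt_pi.2 fun k => hFγ k (θ k) γ)).mul
      (HasDerivAt.fun_finsetProd fun k _ => hMγ k)
  have hsum := sum_map_single_mul_prod_erase L.toLinearMap (fun k => f k (θ k) γ)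
    (fun k => Fγ k (θ k) γ)
  simp only [ContinuousLinearMap.coe_coe] at hsum
  rw [hdensity, sum_congr rfl fun j _ => hflux j, sum_add_distrib, hsum, mul_sum]

/-- Under invariant dependencies (copula density `c` independent of `γ`),
the vector field `V^j(θ|γ) = F^j_γ(θ^j|γ)/f^j(θ^j|γ)` satisfies the continuity equation
`∇_θ · (V(θ|γ) f(θ|γ)) = f_γ(θ|γ)` pointwise wherever densities are positive and smooth. -/
theorem stmt0 (n : ℕ)
    -- marginal CDFs `F j x γ`, marginal densities `f j x γ`, γ-partials `Fγ j x γ`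
    (F f Fγ : Fin n → ℝ → ℝ → ℝ)
    -- copula density, independent of γ
    (c : (Fin n → ℝ) → ℝ)
    -- joint density and its γ-partial
    (fjoint fjointγ : (Fin n → ℝ) → ℝ → ℝ)
    -- smoothness: each marginal CDF is C² jointly, copula density is C¹
    (hFsmooth : ∀ j, ContDiff ℝ 2 (fun p : ℝ × ℝ => F j p.1 p.2))
    (hcsmooth : ContDiff ℝ 1 c)
    -- `f j` is the θ-partial of `F j`, `Fγ j` its γ-partial
    (hf : ∀ j x γ, HasDerivAt (fun y => F j y γ) (f j x γ) x)
    (hFγ : ∀ j x γ, HasDerivAt (fun g => F j x g) (Fγ j x γ) γ)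
    -- invariant dependencies: the joint density has the copula form with `c` constant in γ
    (hjoint : ∀ θ γ, fjoint θ γ = c (fun j => F j (θ j) γ) * ∏ j, f j (θ j) γ)
    -- `fjointγ` is the γ-partial of the joint density
    (hjointγ : ∀ θ γ, HasDerivAt (fun g => fjoint θ g) (fjointγ θ γ) γ)
    -- the vector field `V`
    (V : Fin n → (Fin n → ℝ) → ℝ → ℝ)
    (hV : ∀ j θ γ, V j θ γ = Fγ j (θ j) γ / f j (θ j) γ)
    -- a point where densities are positive
    (θ : Fin n → ℝ) (γ : ℝ)
    (hfpos : ∀ j x g, 0 < f j x g) (hcpos : ∀ u, 0 < c u)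
    -- `D j` is the j-th partial derivative of `(V f)^j` in `θ^j` at the point
    (D : Fin n → ℝ)
    (hD : ∀ j, HasDerivAt
      (fun x => V j (Function.update θ j x) γ * fjoint (Function.update θ j x) γ)
      (D j) (θ j)) :
    -- continuity equation: divergence of `V f` equals `f_γ`
    ∑ j, D j = fjointγ θ γ :=
  stmt0_general n F f Fγ c fjoint fjointγ hFsmooth hcsmooth hf hFγ hjoint hjointγ V hV θ γ hfpos D
    hD
end

section
/- Given the transfer formula t₁(γ) = ∫_Θ u(γ,θ) f(θ|γ)dθ − ∫_{γ̲}^γ ∫_Θ u(γ',θ) f_γ(θ|γ') dθ dγ' and t₂(γ,θ) = θ·∇_θ u(γ,θ) − u(γ,θ), the monopolist's expected revenue E_γ[t₁(γ)] + E_{γ,θ}[t₂(γ,θ)] equals E_{γ,θ}[ θ·∇_θ u(γ,θ) − u(γ,θ) · (f_γ(θ|γ)/f(θ|γ)) · ((1−G(γ))/g(γ)) ], where expectations are taken under γ ∼ G (density g > 0 on [γ̲,γ̄]) and θ|γ ∼ f(·|γ). -/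
/-!
Write `H(γ) = ∫_{γ̲}^γ ∫ u f_γ dθ dγ'`. The first term of `t₁` cancels the `-u` term of `t₂`
in expectation, so the revenue is `E[θ·∇u] - ∫ H g`. Exchanging the order of integration
(integration by parts against `G`) turns `∫ H g` into `∫ (1 - G) ∫ u f_γ dθ dγ`, and writing
`u f_γ = u (f_γ / f) f` expresses this as an expectation under `g` and `f` with the hazard-rate
factor `(1 - G)/g`.
-/

open MeasureTheory

theorem intervalIntegral.integral_primitive_mul_eq_integral_tail_mul {h g : ℝ → ℝ}
    (hh : Continuous h) (hg : Continuous g) (a b : ℝ) :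
    ∫ x in a..b, (∫ s in a..x, h s) * g x = ∫ x in a..b, (∫ s in x..b, g s) * h x := by
  have hderiv {φ : ℝ → ℝ} (hφ : Continuous φ) (x : ℝ) :
      HasDerivAt (fun y => ∫ s in a..y, φ s) (φ x) x :=
    integral_hasDerivAt_right (hφ.intervalIntegrable _ _) (hφ.stronglyMeasurableAtFilter _ _)
      hφ.continuousAt
  have hGc : Continuous fun y => ∫ s in a..y, g s := continuous_primitive hg.intervalIntegrable a
  have parts := integral_mul_deriv_eq_deriv_mul (fun x _ => hderiv hh x) (fun x _ => hderiv hg x)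
    (hh.intervalIntegrable a b) (hg.intervalIntegrable a b)
  have tail : (fun x => (∫ s in x..b, g s) * h x)
      = fun x => (∫ s in a..b, g s) * h x - (∫ s in a..x, g s) * h x := by
    ext x
    rw [← integral_interval_sub_left (hg.intervalIntegrable a b) (hg.intervalIntegrable a x),
      sub_mul]
  rw [tail, parts, integral_sub (f := fun x => (∫ s in a..b, g s) * h x)
    (g := fun x => (∫ s in a..x, g s) * h x)
    ((continuous_const.mul hh).intervalIntegrable _ _) ((hGc.mul hh).intervalIntegrable _ _),
    integral_const_mul, integral_same]
  simp_rw [mul_comm (h _)]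
  ring

theorem intervalIntegral.revenue_identity {S U h g G : ℝ → ℝ} {a b : ℝ}
    (hS : Continuous S) (hU : Continuous U) (hh : Continuous h) (hg : Continuous g)
    (hG : ∀ x, G x = ∫ s in a..x, g s) (hG1 : G b = 1) :
    (∫ x in a..b, (U x - ∫ s in a..x, h s) * g x) + (∫ x in a..b, (S x - U x) * g x)
      = ∫ x in a..b, S x * g x - (1 - G x) * h x := by
  have hH : Continuous fun x => ∫ s in a..x, h s := continuous_primitive hh.intervalIntegrable a
  have hone_sub (x : ℝ) : 1 - G x = ∫ s in x..b, g s := by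
    rw [← hG1, hG, hG, integral_interval_sub_left (hg.intervalIntegrable _ _)
      (hg.intervalIntegrable _ _)]
  have hGc : Continuous G := by
    rw [funext hG]
    exact continuous_primitive hg.intervalIntegrable a
  rw [← integral_add (f := fun x => (U x - ∫ s in a..x, h s) * g x)
      (g := fun x => (S x - U x) * g x)
      (((hU.sub hH).mul hg).intervalIntegrable _ _) (((hS.sub hU).mul hg).intervalIntegrable _ _),
    integral_sub (f := fun x => S x * g x) (g := fun x => (1 - G x) * h x)
      ((hS.mul hg).intervalIntegrable _ _)
      (((continuous_const.sub hGc).mul hh).intervalIntegrable _ _)]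
  simp_rw [hone_sub, ← integral_primitive_mul_eq_integral_tail_mul hh hg]
  rw [← integral_sub (f := fun x => S x * g x) (g := fun x => (∫ s in a..x, h s) * g x)
    ((hS.mul hg).intervalIntegrable _ _) ((hH.mul hg).intervalIntegrable _ _)]
  congr 1 with x
  ring

theorem integral_sub_ratio_mul_weight {α : Type*} [MeasurableSpace α] {μ : Measure α}
    {a b k w : α → ℝ} (c : ℝ) (hw : ∀ x, w x ≠ 0)
    (ha : Integrable (fun x => a x * w x) μ) (hb : Integrable (fun x => b x * k x) μ) :
    ∫ x, (a x - b x * (k x / w x) * c) * w x ∂μ = ∫ x, a x * w x ∂μ - c * ∫ x, b x * k x ∂μ := by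
  have hcancel (x : α) : (a x - b x * (k x / w x) * c) * w x = a x * w x - c * (b x * k x) := by
    field_simp [hw x]
  simp_rw [hcancel]
  rw [integral_sub ha (hb.const_mul c), integral_const_mul]

theorem stmt6_general (n : ℕ) (lo hi : Fin n → ℝ) (glo ghi : ℝ) (hg : glo ≤ ghi)
    (u : ℝ → (Fin n → ℝ) → ℝ)
    (gradu : ℝ → (Fin n → ℝ) → Fin n → ℝ)    -- ∇_θ u (a.e. gradient of the convex u(γ,·))
    (f fγ : (Fin n → ℝ) → ℝ → ℝ)
    (G g : ℝ → ℝ)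
    (t₁ : ℝ → ℝ) (t₂ : ℝ → (Fin n → ℝ) → ℝ)
    -- continuity (hence integrability on the compact domains)
    (huc : Continuous (fun p : ℝ × (Fin n → ℝ) => u p.1 p.2))
    (hgraduc : Continuous (fun p : ℝ × (Fin n → ℝ) => gradu p.1 p.2))
    (hfc : Continuous (fun p : (Fin n → ℝ) × ℝ => f p.1 p.2))
    (hfγc : Continuous (fun p : (Fin n → ℝ) × ℝ => fγ p.1 p.2))
    (hgc : Continuous g)
    -- densities: positivity, `fγ` is the γ-partial of `f`, `G` the CDF of `g`, `G(γ̄)=1`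
    (hfpos : ∀ θ γ, 0 < f θ γ) (hgpos : ∀ γ, γ ∈ Set.Icc glo ghi → 0 < g γ)
    (hG : ∀ γ, G γ = ∫ s in glo..γ, g s) (hG1 : G ghi = 1)
    -- the transfer formulas
    (ht₁ : ∀ γ, t₁ γ = (∫ θ in Set.Icc lo hi, u γ θ * f θ γ)
        - ∫ γ' in glo..γ, ∫ θ in Set.Icc lo hi, u γ' θ * fγ θ γ')
    (ht₂ : ∀ γ θ, t₂ γ θ = (∑ j, θ j * gradu γ θ j) - u γ θ) :
    -- expected revenue equals the virtual-surplus expression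
    (∫ γ in glo..ghi, t₁ γ * g γ)
      + (∫ γ in glo..ghi, (∫ θ in Set.Icc lo hi, t₂ γ θ * f θ γ) * g γ)
    = ∫ γ in glo..ghi,
        (∫ θ in Set.Icc lo hi,
          ((∑ j, θ j * gradu γ θ j)
            - u γ θ * (fγ θ γ / f θ γ) * ((1 - G γ) / g γ)) * f θ γ) * g γ := by
  set K := Set.Icc lo hi
  set S := fun γ => ∫ θ in K, (∑ j, θ j * gradu γ θ j) * f θ γ
  set U := fun γ => ∫ θ in K, u γ θ * f θ γ
  set h := fun γ => ∫ θ in K, u γ θ * fγ θ γ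
  have hK : IsCompact K := isCompact_Icc
  have cS : Continuous (Function.uncurry fun γ (θ : Fin n → ℝ) =>
      (∑ j, θ j * gradu γ θ j) * f θ γ) :=
    (continuous_finsetSum _ fun j _ =>
      ((continuous_apply j).comp continuous_snd).mul ((continuous_apply j).comp hgraduc)).mul
      (hfc.comp continuous_swap)
  have cU : Continuous (Function.uncurry fun γ (θ : Fin n → ℝ) => u γ θ * f θ γ) :=
    huc.mul (hfc.comp continuous_swap)
  have ch : Continuous (Function.uncurry fun γ (θ : Fin n → ℝ) => u γ θ * fγ θ γ) :=
    huc.mul (hfγc.comp continuous_swap)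
  have slice {F : ℝ → (Fin n → ℝ) → ℝ} (hF : Continuous (Function.uncurry F)) (γ : ℝ) :
      IntegrableOn (F γ) K :=
    (hF.uncurry_left γ).continuousOn.integrableOn_compact hK
  have hB (γ : ℝ) : ∫ θ in K, t₂ γ θ * f θ γ = S γ - U γ := by
    simp_rw [ht₂, sub_mul]
    exact integral_sub (slice cS γ) (slice cU γ)
  have hRHS : ∀ γ ∈ Set.uIcc glo ghi,
      (∫ θ in K, ((∑ j, θ j * gradu γ θ j)
          - u γ θ * (fγ θ γ / f θ γ) * ((1 - G γ) / g γ)) * f θ γ) * g γ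
        = S γ * g γ - (1 - G γ) * h γ := by
    intro γ hγ
    rw [Set.uIcc_of_le hg] at hγ
    rw [integral_sub_ratio_mul_weight _ (fun θ => (hfpos θ γ).ne') (slice cS γ) (slice ch γ)]
    change (S γ - (1 - G γ) / g γ * h γ) * g γ = _
    field_simp [(hgpos γ hγ).ne']
  rw [intervalIntegral.integral_congr hRHS, ← intervalIntegral.revenue_identity
    (continuous_parametric_integral_of_continuous cS hK (μ := volume))
    (continuous_parametric_integral_of_continuous cU hK (μ := volume))
    (continuous_parametric_integral_of_continuous ch hK (μ := volume)) hgc hG hG1]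
  simp only [ht₁, hB]
  rfl

/-- Given the transfer formulas
`t₁(γ) = ∫ u f dθ − ∫_{γ̲}^γ ∫ u f_γ dθ dγ'` and `t₂(γ,θ) = θ·∇_θ u − u`, the monopolist's
expected revenue `E_γ[t₁] + E_{γ,θ}[t₂]` equals
`E_{γ,θ}[ θ·∇_θ u − u · (f_γ/f) · ((1−G)/g) ]`. -/
theorem stmt6 (n : ℕ) (lo hi : Fin n → ℝ) (glo ghi : ℝ) (hg : glo ≤ ghi)
    (u : ℝ → (Fin n → ℝ) → ℝ)
    (gradu : ℝ → (Fin n → ℝ) → Fin n → ℝ)    -- ∇_θ u (a.e. gradient of the convex u(γ,·))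
    (f fγ : (Fin n → ℝ) → ℝ → ℝ)
    (G g : ℝ → ℝ)
    (t₁ : ℝ → ℝ) (t₂ : ℝ → (Fin n → ℝ) → ℝ)
    -- continuity (hence integrability on the compact domains)
    (huc : Continuous (fun p : ℝ × (Fin n → ℝ) => u p.1 p.2))
    (hgraduc : Continuous (fun p : ℝ × (Fin n → ℝ) => gradu p.1 p.2))
    (hfc : Continuous (fun p : (Fin n → ℝ) × ℝ => f p.1 p.2))
    (hfγc : Continuous (fun p : (Fin n → ℝ) × ℝ => fγ p.1 p.2))
    (hgc : Continuous g)
    -- `u(γ,·)` convex and 1-Lipschitz with a.e. gradient `gradu`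
    (hconv : ∀ γ, ConvexOn ℝ (Set.Icc lo hi) (u γ))
    (hlip : ∀ γ, LipschitzWith 1 (u γ))
    (hgrad : ∀ γ, ∀ᵐ θ ∂(volume.restrict (Set.Icc lo hi)),
        ∀ j, HasDerivAt (fun x => u γ (Function.update θ j x)) (gradu γ θ j) (θ j))
    -- densities: positivity, `fγ` is the γ-partial of `f`, `G` the CDF of `g`, `G(γ̄)=1`
    (hfpos : ∀ θ γ, 0 < f θ γ) (hgpos : ∀ γ, γ ∈ Set.Icc glo ghi → 0 < g γ)
    (hfd : ∀ θ γ, HasDerivAt (fun s => f θ s) (fγ θ γ) γ)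
    (hfdens : ∀ γ, ∫ θ in Set.Icc lo hi, f θ γ = 1)
    (hG : ∀ γ, G γ = ∫ s in glo..γ, g s) (hG1 : G ghi = 1)
    -- the transfer formulas
    (ht₁ : ∀ γ, t₁ γ = (∫ θ in Set.Icc lo hi, u γ θ * f θ γ)
        - ∫ γ' in glo..γ, ∫ θ in Set.Icc lo hi, u γ' θ * fγ θ γ')
    (ht₂ : ∀ γ θ, t₂ γ θ = (∑ j, θ j * gradu γ θ j) - u γ θ) :
    -- expected revenue equals the virtual-surplus expression
    (∫ γ in glo..ghi, t₁ γ * g γ)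
      + (∫ γ in glo..ghi, (∫ θ in Set.Icc lo hi, t₂ γ θ * f θ γ) * g γ)
    = ∫ γ in glo..ghi,
        (∫ θ in Set.Icc lo hi,
          ((∑ j, θ j * gradu γ θ j)
            - u γ θ * (fγ θ γ / f θ γ) * ((1 - G γ) / g γ)) * f θ γ) * g γ :=
  stmt6_general n lo hi glo ghi hg u gradu f fγ G g t₁ t₂ huc hgraduc hfc hfγc hgc hfpos hgpos hG
    hG1 ht₁ ht₂
end
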